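/- arXiv:2108.11832 — 5 statements merged into one kernel-verified Lean document; each statement's English description precedes it below -/
import Mathlib

section
/- Let X and Y be subsets of a Euclidean space. If X is (b≤)-regular along Y (meaning ⟨v, y - x⟩ ≤ o(‖y - x‖) for all x ∈ X, y ∈ Y, and unit vectors v ∈ N_X(x), as x and y tend to a common point), then X is (a)-regular along Y: for any sequence x_i ∈ X converging to a point y ∈ Y and any limiting normal vectors v_i ∈ N_X(x_i) converging to a vector v, we have v ∈ N̂_Y(y). -/
open Filter Topology Metric
open scoped RealInnerProductSpace

variable {E : Type*} [NormedAddCommGroup E] [InnerProductSpace ℝ E]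

/-- The Fréchet normal cone to a set `Q` at a point `x`. -/
def frechetNormalCone (Q : Set E) (x : E) : Set E :=
  {v | ∀ ε > 0, ∃ δ > 0, ∀ y ∈ Q, ‖y - x‖ < δ → ⟪v, y - x⟫ ≤ ε * ‖y - x‖}

/-- The limiting normal cone to a set `Q` at a point `x`. -/
def limitingNormalCone (Q : Set E) (x : E) : Set E :=
  {v | ∃ xs vs : ℕ → E, (∀ n, xs n ∈ Q) ∧ (∀ n, vs n ∈ frechetNormalCone Q (xs n)) ∧
    Tendsto xs atTop (𝓝 x) ∧ Tendsto vs atTop (𝓝 v)}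

/-! If `v ∉ N̂_Y(y)`, there are `z_k ∈ Y` tending to `y` with `⟪v, z_k - y⟫ > ε ‖z_k - y‖`.
Passing to a subsequence, take `x_k ∈ X` so much closer to `y` than `z_k` that `z_k - x_k` is a
small relative perturbation of `z_k - y`, and normals `v_k ∈ N_X(x_k)` close to `v`. Then the unit
normals `v_k / ‖v_k‖` keep a positive inner product, at least `ε / (4 ‖v‖)`, with the unit vectors
from `x_k` to `z_k`, contradicting `(b≤)`. -/

open NormedSpace

lemma smul_mem_frechetNormalCone {Q : Set E} {x v : E} {c : ℝ} (hc : 0 < c)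
    (hv : v ∈ frechetNormalCone Q x) : c • v ∈ frechetNormalCone Q x := by
  intro ε hε
  obtain ⟨δ, hδ, h⟩ := hv (ε / c) (div_pos hε hc)
  refine ⟨δ, hδ, fun z hz hzx => ?_⟩
  calc ⟪c • v, z - x⟫ = c * ⟪v, z - x⟫ := real_inner_smul_left _ _ _
    _ ≤ c * (ε / c * ‖z - x‖) := mul_le_mul_of_nonneg_left (h z hz hzx) hc.le
    _ = ε * ‖z - x‖ := by field_simp

lemma normalize_mem_limitingNormalCone {Q : Set E} {x v : E}
    (hv : v ∈ limitingNormalCone Q x) : normalize v ∈ limitingNormalCone Q x := by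
  rcases eq_or_ne v 0 with rfl | hv0
  · simpa using hv
  obtain ⟨xs, vs, hxQ, hvN, hxs, hvs⟩ := hv
  have hc : 0 < ‖v‖⁻¹ := inv_pos.mpr (norm_pos_iff.mpr hv0)
  exact ⟨xs, fun n => ‖v‖⁻¹ • vs n, hxQ, fun n => smul_mem_frechetNormalCone hc (hvN n), hxs,
    hvs.const_smul _⟩

lemma exists_seq_of_notMem_frechetNormalCone {Y : Set E} {y v : E}
    (hv : v ∉ frechetNormalCone Y y) :
    ∃ ε > 0, ∃ zs : ℕ → E, (∀ k, zs k ∈ Y) ∧ Tendsto zs atTop (𝓝 y) ∧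
      ∀ k, ε * ‖zs k - y‖ < ⟪v, zs k - y⟫ := by
  simp only [frechetNormalCone, Set.mem_ofPred_eq] at hv
  push Not at hv
  obtain ⟨ε, hε, hv⟩ := hv
  choose zs hzY hzy hzv using fun k : ℕ => hv (1 / (k + 1)) Nat.one_div_pos_of_nat
  refine ⟨ε, hε, zs, hzY, ?_, hzv⟩
  rw [tendsto_iff_norm_sub_tendsto_zero]
  exact squeeze_zero (fun _ => norm_nonneg _) (fun k => (hzy k).le)
    tendsto_one_div_add_atTop_nhds_zero_nat

lemma lt_norm_of_mul_norm_lt_inner {v w : E} {ε : ℝ} (h : ε * ‖w‖ < ⟪v, w⟫) : ε < ‖v‖ :=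
  lt_of_mul_lt_mul_right (h.trans_le (real_inner_le_norm v w)) (norm_nonneg w)

lemma div_le_inner_normalize_div_norm {v v' w e : E} {ε : ℝ} (hw : ε * ‖w‖ < ⟪v, w⟫)
    (hv' : ‖v' - v‖ ≤ ε / 4) (he : ‖v‖ * ‖e‖ ≤ ε / 4 * ‖w‖) :
    ε / (4 * ‖v‖) ≤ ⟪normalize v', w + e⟫ / ‖w + e‖ := by
  have hεv := lt_norm_of_mul_norm_lt_inner hw
  have hε : 0 ≤ ε := by linarith [norm_nonneg (v' - v)]
  have hv : 0 < ‖v‖ := hε.trans_lt hεv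
  have hw0 : 0 < ‖w‖ := by
    by_contra! h
    simp [norm_le_zero_iff.mp h] at hw
  have he' : ‖e‖ ≤ ‖w‖ / 4 := by
    rw [le_div_iff₀ (by norm_num : (0 : ℝ) < 4)]
    nlinarith
  have hd_le : ‖w + e‖ ≤ 5 / 4 * ‖w‖ := by linarith [norm_add_le w e]
  have hd_ge : 3 / 4 * ‖w‖ ≤ ‖w + e‖ := by linarith [norm_sub_le_norm_add w e]
  have hv'_le : ‖v'‖ ≤ 5 / 4 * ‖v‖ := by linarith [norm_le_norm_add_norm_sub' v' v]
  have hv'_ge : 3 / 4 * ‖v‖ ≤ ‖v'‖ := by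
    linarith [norm_le_norm_add_norm_sub' v v', norm_sub_rev v v']
  have hinner : 7 / 16 * ε * ‖w‖ ≤ ⟪v', w + e⟫ := by
    have hsplit : ⟪v', w + e⟫ = ⟪v, w⟫ + ⟪v, e⟫ + ⟪v' - v, w + e⟫ := by
      simp only [inner_sub_left, inner_add_right]; ring
    have hve := neg_le_of_abs_le (abs_real_inner_le_norm v e)
    have hv'd := neg_le_of_abs_le (abs_real_inner_le_norm (v' - v) (w + e))
    have := mul_le_mul hv' hd_le (norm_nonneg _) (by positivity)
    linarith
  have hnorm : ⟪normalize v', w + e⟫ / ‖w + e‖ = ⟪v', w + e⟫ / (‖v'‖ * ‖w + e‖) := by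
    rw [NormedSpace.normalize, real_inner_smul_left, div_mul_eq_div_div, inv_mul_eq_div]
  rw [hnorm, div_le_div_iff₀ (by positivity) (mul_pos (by linarith) (by linarith))]
  calc ε * (‖v'‖ * ‖w + e‖) ≤ ε * (5 / 4 * ‖v‖ * (5 / 4 * ‖w‖)) := by gcongr
    _ ≤ 7 / 16 * ε * ‖w‖ * (4 * ‖v‖) := by nlinarith [mul_nonneg (mul_nonneg hε hv.le) hw0.le]
    _ ≤ ⟪v', w + e⟫ * (4 * ‖v‖) := by gcongr

lemma ne_zero_of_pos_le_inner_div_norm {a d : E} {c : ℝ} (hc : 0 < c)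
    (h : c ≤ ⟪a, d⟫ / ‖d‖) : a ≠ 0 ∧ d ≠ 0 := by
  constructor <;> rintro rfl <;>
    simp only [inner_zero_left, inner_zero_right, zero_div, norm_zero, div_zero] at h <;> linarith

lemma le_limsup_inner_div_norm {u d : ℕ → E} (hu : ∀ k, ‖u k‖ ≤ 1) {c : ℝ}
    (h : ∀ k, c ≤ ⟪u k, d k⟫ / ‖d k‖) : c ≤ limsup (fun k => ⟪u k, d k⟫ / ‖d k‖) atTop := by
  refine le_limsup_of_frequently_le (Frequently.of_forall h) (isBoundedUnder_of ⟨1, fun k => ?_⟩)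
  refine div_le_one_of_le₀ ((real_inner_le_norm _ _).trans ?_) (norm_nonneg _)
  simpa using mul_le_mul_of_nonneg_right (hu k) (norm_nonneg (d k))

/-- If `X` is `(b≤)`-regular along `Y` (for sequences `x_i ∈ X`, `y_i ∈ Y`
converging to a common point, with unit limiting normals `v_i ∈ N_X(x_i)`, one has
`limsup ⟪v_i, (y_i - x_i)/‖y_i - x_i‖⟫ ≤ 0`), then `X` is (a)-regular along `Y`: limits of
limiting normals along sequences `x_i ∈ X → y ∈ Y` belong to the Fréchet normal cone `N̂_Y(y)`. -/
theorem bLeq_implies_aRegular (X Y : Set E)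
    (hb : ∀ p : E, ∀ xs ys vs : ℕ → E,
        (∀ n, xs n ∈ X) → (∀ n, ys n ∈ Y) →
        Tendsto xs atTop (𝓝 p) → Tendsto ys atTop (𝓝 p) →
        (∀ n, vs n ∈ limitingNormalCone X (xs n)) → (∀ n, ‖vs n‖ = 1) →
        (∀ n, ys n ≠ xs n) →
        limsup (fun n => ⟪vs n, ys n - xs n⟫ / ‖ys n - xs n‖) atTop ≤ 0) :
    ∀ y ∈ Y, ∀ xs vs : ℕ → E, ∀ v : E,
      (∀ n, xs n ∈ X) → (∀ n, vs n ∈ limitingNormalCone X (xs n)) →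
      Tendsto xs atTop (𝓝 y) → Tendsto vs atTop (𝓝 v) →
      v ∈ frechetNormalCone Y y := by
  intro y _ xs vs v hxX hvN hxs hvs
  by_contra hv
  obtain ⟨ε, hε, zs, hzY, hzs, hzv⟩ := exists_seq_of_notMem_frechetNormalCone hv
  have hv0 : 0 < ‖v‖ := hε.trans (lt_norm_of_mul_norm_lt_inner (hzv 0))
  have hzy : ∀ k, 0 < ‖zs k - y‖ := fun k => norm_pos_iff.mpr fun h => by simpa [h] using hzv k
  have hx0 : Tendsto (fun n => ‖v‖ * ‖y - xs n‖) atTop (𝓝 0) := by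
    simpa [norm_sub_rev] using (tendsto_iff_norm_sub_tendsto_zero.mp hxs).const_mul ‖v‖
  obtain ⟨φ, hφ, hφ_near⟩ := extraction_forall_of_eventually fun k =>
    (Metric.tendsto_nhds.mp hvs (ε / 4) (by positivity)).and
      (hx0.eventually (gt_mem_nhds (mul_pos (by positivity : 0 < ε / 4) (hzy k))))
  have hbound : ∀ k, ε / (4 * ‖v‖) ≤
      ⟪normalize (vs (φ k)), zs k - xs (φ k)⟫ / ‖zs k - xs (φ k)‖ := fun k => by
    simpa using div_le_inner_normalize_div_norm (hzv k)
      (by rw [← dist_eq_norm]; exact (hφ_near k).1.le) (hφ_near k).2.le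
  have hc : 0 < ε / (4 * ‖v‖) := by positivity
  have hne := fun k => ne_zero_of_pos_le_inner_div_norm hc (hbound k)
  have hunit k : ‖normalize (vs (φ k))‖ = 1 :=
    norm_normalize ((normalize_eq_zero_iff _).not.mp (hne k).1)
  have hlimsup := hb y (xs ∘ φ) zs (fun k => normalize (vs (φ k))) (fun k => hxX _) hzY
    (hxs.comp hφ.tendsto_atTop) hzs (fun k => normalize_mem_limitingNormalCone (hvN _)) hunit
    (fun k => sub_ne_zero.mp (hne k).2)
  exact (hc.trans_le (le_limsup_inner_div_norm (fun k => (hunit k).le) hbound)).not_ge hlimsup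
end

section
/- Fix k₀ ∈ ℕ, c > 0, and γ ∈ (1/2, 1], with c ≥ 6 if γ = 1. Let {X_k}, {Y_k}, {Z_k} be nonnegative random variables adapted to a filtration {F_k} satisfying E[X_{k+1} | F_k] ≤ (1 − c k^{−γ}) X_k − Y_k + Z_k for all k ≥ k₀. Define a_k = k^{2γ−1} / (log(k+1))². Then on the event {∑_k a_{k+1} Z_k < ∞}, the sequence a_k X_k converges almost surely to a finite random variable and ∑_k a_{k+1} Y_k < ∞ almost surely. -/
/-!
Once `(1 - c k^{-γ}) a_{k+1} ≤ a_k`, multiplying the recursion by `a_{k+1}` gives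
`E[a_{k+1} X_{k+1} | F_k] ≤ a_k X_k - a_{k+1} Y_k + a_{k+1} Z_k`, and the Robbins–Siegmund theorem
applies to the processes shifted past that point. The weight inequality is Bernoulli's
`(1 + 1/k)^{2γ-1} ≤ 1 + (2γ-1)/k` together with `(2γ-1)/k ≤ c k^{-γ}` for large `k`; the
logarithmic factor of `a_{k+1}` is at most that of `a_k`.

For Robbins–Siegmund, `M_k = A_k - ∑_{j<k} (C_j - D_j)` is a supermartingale with
`-M_k ≤ ∑_{j<k} C_j`. The partial sums of `C` are predictable, so stopping `-M` when they first
reach `n` leaves a submartingale bounded above by `n`, hence bounded in `L¹` and convergent. On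
`{∑ C < ∞}` that stopping never happens for large `n`, so `M` converges; then `∑ D` is bounded and
`A = M + ∑ C - ∑ D` converges.
-/

open Filter Topology MeasureTheory

theorem add_one_rpow_le_rpow_mul {x p : ℝ} (hx : 0 < x) (hp0 : 0 ≤ p) (hp1 : p ≤ 1) :
    (x + 1) ^ p ≤ x ^ p * (1 + p / x) := by
  have hsplit : x + 1 = x * (1 + x⁻¹) := by field_simp
  rw [hsplit, Real.mul_rpow hx.le (by positivity), div_eq_mul_inv]
  exact mul_le_mul_of_nonneg_left
    (rpow_one_add_le_one_add_mul_self (by linarith [inv_pos.2 hx]) hp0 hp1) (by positivity)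

theorem one_sub_mul_le_rpow {x p b y : ℝ} (hx : 0 < x) (hp0 : 0 ≤ p) (hp1 : p ≤ 1)
    (hb : p / x ≤ b) (hy0 : 0 ≤ y) (hy : y ≤ (x + 1) ^ p) : (1 - b) * y ≤ x ^ p := by
  have hxp : 0 ≤ x ^ p := by positivity
  rcases le_total (1 - b) 0 with hneg | hpos
  · exact (mul_nonpos_of_nonpos_of_nonneg hneg hy0).trans hxp
  have hpx : 0 ≤ p / x := by positivity
  calc (1 - b) * y ≤ (1 - b) * (x ^ p * (1 + p / x)) :=
        mul_le_mul_of_nonneg_left (hy.trans (add_one_rpow_le_rpow_mul hx hp0 hp1)) hpos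
    _ ≤ (1 - p / x) * (x ^ p * (1 + p / x)) :=
        mul_le_mul_of_nonneg_right (by linarith) (by positivity)
    _ ≤ x ^ p := by nlinarith [mul_nonneg hxp (mul_nonneg hpx hpx)]

theorem eventually_div_natCast_le_mul_rpow_neg {p c γ : ℝ} (hc : 0 < c) (hγ : γ ≤ 1)
    (hp : γ = 1 → p ≤ c) : ∀ᶠ k : ℕ in atTop, p / k ≤ c * (k : ℝ) ^ (-γ) := by
  have hev : ∀ᶠ k : ℕ in atTop, p * (k : ℝ) ^ (γ - 1) ≤ c := by
    rcases hγ.eq_or_lt with rfl | hlt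
    · simpa using Eventually.of_forall (f := atTop) fun _ : ℕ => hp rfl
    · have hzero : Tendsto (fun k : ℕ => p * (k : ℝ) ^ (γ - 1)) atTop (𝓝 0) := by
        have := (tendsto_rpow_neg_atTop (y := 1 - γ) (by linarith)).comp
          tendsto_natCast_atTop_atTop
        simpa [Function.comp_def] using this.const_mul p
      exact (hzero.eventually_lt_const hc).mono fun _ => le_of_lt
  filter_upwards [hev, eventually_gt_atTop 0] with k hk hk0
  have hk0' : (0 : ℝ) < k := Nat.cast_pos.2 hk0
  have hsplit : p / k = p * (k : ℝ) ^ (γ - 1) * (k : ℝ) ^ (-γ) := by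
    rw [mul_assoc, ← Real.rpow_add hk0', show γ - 1 + -γ = -1 by ring, Real.rpow_neg_one,
      div_eq_mul_inv]
  rw [hsplit]
  exact mul_le_mul_of_nonneg_right hk (by positivity)

namespace RobbinsSiegmund

noncomputable def weight (γ : ℝ) (k : ℕ) : ℝ := (k : ℝ) ^ (2 * γ - 1) / Real.log ((k : ℝ) + 1) ^ 2

theorem weight_nonneg (γ : ℝ) (k : ℕ) : 0 ≤ weight γ k := by
  unfold weight; positivity

theorem weight_succ (γ : ℝ) (k : ℕ) :
    weight γ (k + 1) = ((k + 1 : ℝ) ^ (2 * γ - 1) / Real.log ((k : ℝ) + 2) ^ 2) := by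
  rw [weight, Nat.cast_succ, add_assoc, one_add_one_eq_two]

theorem eventually_one_sub_mul_weight_succ_le {c γ : ℝ} (hc : 0 < c) (hγ : 1 / 2 < γ ∧ γ ≤ 1)
    (hc6 : γ = 1 → 6 ≤ c) :
    ∀ᶠ k : ℕ in atTop, (1 - c * (k : ℝ) ^ (-γ)) * weight γ (k + 1) ≤ weight γ k := by
  filter_upwards [eventually_div_natCast_le_mul_rpow_neg (p := 2 * γ - 1) hc hγ.2
    fun h => by linarith [hc6 h], eventually_gt_atTop 0] with k hk hk0
  have hx : (0 : ℝ) < k := Nat.cast_pos.2 hk0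
  have hlog : 0 < Real.log ((k : ℝ) + 1) := Real.log_pos (by linarith)
  have hlog_le : Real.log ((k : ℝ) + 1) ≤ Real.log ((k : ℝ) + 1 + 1) :=
    Real.log_le_log (by linarith) (by linarith)
  have hratio : (Real.log ((k : ℝ) + 1) / Real.log ((k : ℝ) + 1 + 1)) ^ 2 ≤ 1 :=
    pow_le_one₀ (div_nonneg hlog.le (hlog.trans_le hlog_le).le)
      ((div_le_one (hlog.trans_le hlog_le)).2 hlog_le)
  rw [weight, weight, Nat.cast_succ, le_div_iff₀ (by positivity)]
  calc (1 - c * (k : ℝ) ^ (-γ)) * (((k : ℝ) + 1) ^ (2 * γ - 1) / Real.log ((k : ℝ) + 1 + 1) ^ 2)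
        * Real.log ((k : ℝ) + 1) ^ 2
      = (1 - c * (k : ℝ) ^ (-γ)) * (((k : ℝ) + 1) ^ (2 * γ - 1) *
          (Real.log ((k : ℝ) + 1) / Real.log ((k : ℝ) + 1 + 1)) ^ 2) := by ring
    _ ≤ (k : ℝ) ^ (2 * γ - 1) :=
        one_sub_mul_le_rpow hx (by linarith) (by linarith) hk (by positivity)
          (mul_le_of_le_one_right (by positivity) hratio)

end RobbinsSiegmund

namespace MeasureTheory

variable {Ω : Type*} {m0 : MeasurableSpace Ω} {μ : Measure Ω} {𝒢 : Filtration ℕ m0}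

def Filtration.shift (ℱ : Filtration ℕ m0) (K : ℕ) : Filtration ℕ m0 where
  seq k := ℱ (K + k)
  mono' _ _ hij := ℱ.mono (Nat.add_le_add_left hij K)
  le' k := ℱ.le (K + k)

theorem condExp_const_mul_le_of_le {m : MeasurableSpace Ω} {X' X Y Z : Ω → ℝ} {α β b : ℝ}
    (hβ : 0 ≤ β) (hb : b * β ≤ α) (hX : ∀ ω, 0 ≤ X ω)
    (h : μ[X'|m] ≤ᵐ[μ] fun ω => b * X ω - Y ω + Z ω) :
    μ[(fun ω => β * X' ω)|m] ≤ᵐ[μ] fun ω => α * X ω - β * Y ω + β * Z ω := by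
  filter_upwards [condExp_smul (μ := μ) β X' m, h] with ω hsmul hω
  have hbX : β * (b * X ω) ≤ α * X ω := by nlinarith [hX ω]
  change μ[β • X'|m] ω ≤ _
  rw [hsmul, Pi.smul_apply, smul_eq_mul]
  nlinarith [mul_le_mul_of_nonneg_left hω hβ]

theorem Submartingale.eLpNorm_one_le_of_le [IsFiniteMeasure μ] {g : ℕ → Ω → ℝ}
    (hg : Submartingale g 𝒢 μ) {r : ℝ} (hr : 0 ≤ r) (hle : ∀ k ω, g k ω ≤ r) (k : ℕ) :
    eLpNorm (g k) 1 μ ≤ ENNReal.ofReal (2 * r * μ.real Set.univ - ∫ ω, g 0 ω ∂μ) := by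
  rw [eLpNorm_one_eq_lintegral_enorm, ← ofReal_integral_norm_eq_lintegral_enorm (hg.integrable k)]
  refine ENNReal.ofReal_le_ofReal ?_
  have habs : ∀ ω, ‖g k ω‖ ≤ 2 * r - g k ω := fun ω => by
    rw [Real.norm_eq_abs, abs_le]
    constructor <;> linarith [hle k ω]
  have hmono : ∫ ω, g 0 ω ∂μ ≤ ∫ ω, g k ω ∂μ := by
    simpa using hg.setIntegral_le k.zero_le MeasurableSet.univ
  calc ∫ ω, ‖g k ω‖ ∂μ ≤ ∫ ω, (2 * r - g k ω) ∂μ :=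
        integral_mono (hg.integrable k).norm ((integrable_const _).sub (hg.integrable k)) habs
    _ = 2 * r * μ.real Set.univ - ∫ ω, g k ω ∂μ := by
        rw [integral_sub (integrable_const _) (hg.integrable k), integral_const, smul_eq_mul,
          mul_comm]
    _ ≤ 2 * r * μ.real Set.univ - ∫ ω, g 0 ω ∂μ := by linarith

theorem stoppedProcess_leastGE_sum_le {g C : ℕ → Ω → ℝ}
    (hle : ∀ k ω, g k ω ≤ ∑ j ∈ Finset.range k, C j ω) {r : ℝ} (hr : 0 ≤ r) (k : ℕ) (ω : Ω) :
    stoppedProcess g (leastGE (fun k ω => ∑ j ∈ Finset.range (k + 1), C j ω) r) k ω ≤ r := by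
  set τ := leastGE (fun k ω => ∑ j ∈ Finset.range (k + 1), C j ω) r
  have hbefore : ∀ j : ℕ, WithTop.some j ≤ τ ω → g j ω ≤ r := by
    rintro (_ | i) hi
    · exact (hle 0 ω).trans (by simpa using hr)
    · have := notMem_of_lt_hittingAfter ((WithTop.coe_lt_coe.2 i.lt_succ_self).trans_le hi) bot_le
      simp only [Set.mem_Ici, not_le] at this
      exact (hle (i + 1) ω).trans this.le
  rcases le_total (WithTop.some k) (τ ω) with hk | hk
  · rw [stoppedProcess_eq_of_le hk]
    exact hbefore k hk
  · rw [stoppedProcess_eq_of_ge hk]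
    obtain ⟨j, hj⟩ := WithTop.ne_top_iff_exists.1 (ne_top_of_le_ne_top (by simp) hk)
    rw [← hj]
    exact hbefore j hj.le

theorem Submartingale.ae_exists_tendsto_of_le_sum [IsFiniteMeasure μ] {g C : ℕ → Ω → ℝ}
    (hg : Submartingale g 𝒢 μ) (hC : StronglyAdapted 𝒢 C)
    (hle : ∀ k ω, g k ω ≤ ∑ j ∈ Finset.range k, C j ω) :
    ∀ᵐ ω ∂μ, BddAbove (Set.range fun k => ∑ j ∈ Finset.range k, C j ω) →
      ∃ L, Tendsto (fun k => g k ω) atTop (𝓝 L) := by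
  set S : ℕ → Ω → ℝ := fun k ω => ∑ j ∈ Finset.range (k + 1), C j ω
  have hS : StronglyAdapted 𝒢 S := fun k =>
    Finset.stronglyMeasurable_fun_sum _ fun j hj =>
      (hC j).mono (𝒢.mono (Nat.lt_succ_iff.1 (Finset.mem_range.1 hj)))
  have hstopped : ∀ᵐ ω ∂μ, ∀ n : ℕ, ∃ L,
      Tendsto (fun k => stoppedProcess g (leastGE S n) k ω) atTop (𝓝 L) := by
    refine ae_all_iff.2 fun n => ?_
    have hT := hg.stoppedProcess (hS.isStoppingTime_leastGE (n : ℝ))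
    exact hT.exists_ae_tendsto_of_bdd
      (hT.eLpNorm_one_le_of_le n.cast_nonneg (stoppedProcess_leastGE_sum_le hle n.cast_nonneg))
  filter_upwards [hstopped] with ω hω ⟨B, hB⟩
  obtain ⟨n, hn⟩ := exists_nat_gt B
  have hnever : leastGE S n ω = ⊤ :=
    hittingAfter_eq_top_iff.2 fun k _ hk => (hB ⟨k + 1, rfl⟩).not_gt (hn.trans_le hk)
  obtain ⟨L, hL⟩ := hω n
  exact ⟨L, hL.congr fun k => stoppedProcess_eq_of_le (by simp [hnever])⟩

theorem supermartingale_sub_sum_of_condExp_le [IsFiniteMeasure μ] {A E : ℕ → Ω → ℝ}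
    (hA : StronglyAdapted 𝒢 A) (hE : StronglyAdapted 𝒢 E) (hAint : ∀ k, Integrable (A k) μ)
    (hEint : ∀ k, Integrable (E k) μ) (hstep : ∀ k, μ[A (k + 1)|𝒢 k] ≤ᵐ[μ] A k + E k) :
    Supermartingale (fun k => A k - ∑ j ∈ Finset.range k, E j) 𝒢 μ := by
  have hSm : ∀ k i, k ≤ i + 1 → StronglyMeasurable[𝒢 i] (∑ j ∈ Finset.range k, E j) :=
    fun k i hki => Finset.stronglyMeasurable_sum _ fun j hj =>
      (hE j).mono (𝒢.mono (by simp only [Finset.mem_range] at hj; omega))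
  have hSint : ∀ k, Integrable (∑ j ∈ Finset.range k, E j) μ := fun k =>
    integrable_finsetSum' _ fun j _ => hEint j
  refine supermartingale_nat (fun k => (hA k).sub (hSm k k k.le_succ))
    (fun k => (hAint k).sub (hSint k)) fun k => ?_
  have hpred : μ[∑ j ∈ Finset.range (k + 1), E j|𝒢 k] = ∑ j ∈ Finset.range (k + 1), E j :=
    condExp_of_stronglyMeasurable (𝒢.le k) (hSm _ _ le_rfl) (hSint _)
  filter_upwards [condExp_sub (m := 𝒢 k) (hAint (k + 1)) (hSint (k + 1)), hstep k]
    with ω hsub hω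
  rw [hpred] at hsub
  simp only [Pi.sub_apply, Pi.add_apply, Finset.sum_range_succ, Finset.sum_apply] at hsub hω ⊢
  linarith

theorem ae_tendsto_and_summable_of_condExp_le [IsFiniteMeasure μ] {A C D : ℕ → Ω → ℝ}
    (hA : StronglyAdapted 𝒢 A) (hC : StronglyAdapted 𝒢 C) (hD : StronglyAdapted 𝒢 D)
    (hA0 : ∀ k ω, 0 ≤ A k ω) (hD0 : ∀ k ω, 0 ≤ D k ω) (hAint : ∀ k, Integrable (A k) μ)
    (hCint : ∀ k, Integrable (C k) μ) (hDint : ∀ k, Integrable (D k) μ)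
    (hstep : ∀ k, μ[A (k + 1)|𝒢 k] ≤ᵐ[μ] fun ω => A k ω - D k ω + C k ω) :
    ∀ᵐ ω ∂μ, Summable (fun k => C k ω) →
      (∃ L, Tendsto (fun k => A k ω) atTop (𝓝 L)) ∧ Summable fun k => D k ω := by
  have hsuper := supermartingale_sub_sum_of_condExp_le hA (hC.sub hD) hAint
    (fun k => (hCint k).sub (hDint k)) fun k => by
      filter_upwards [hstep k] with ω hω
      simp only [Pi.add_apply, Pi.sub_apply]
      linarith
  have hle : ∀ k ω, -(A k ω - ∑ j ∈ Finset.range k, (C - D) j ω) ≤ ∑ j ∈ Finset.range k, C j ω :=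
    fun k ω => by
      have := Finset.sum_nonneg fun j (_ : j ∈ Finset.range k) => hD0 j ω
      simp only [Pi.sub_apply, Finset.sum_sub_distrib]
      linarith [hA0 k ω]
  filter_upwards [hsuper.neg.ae_exists_tendsto_of_le_sum hC (by simpa using hle)] with ω hconv hCsum
  have hSC := hCsum.hasSum.tendsto_sum_nat
  obtain ⟨L, hL⟩ := hconv hSC.bddAbove_range
  have hM : Tendsto (fun k => A k ω - ∑ j ∈ Finset.range k, (C j ω - D j ω)) atTop (𝓝 (-L)) := by
    simpa using hL.neg
  have hA_eq : ∀ k, A k ω = (A k ω - ∑ j ∈ Finset.range k, (C j ω - D j ω)) +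
      ∑ j ∈ Finset.range k, C j ω - ∑ j ∈ Finset.range k, D j ω := fun k => by
    rw [Finset.sum_sub_distrib]; ring
  obtain ⟨B, hB⟩ := (hM.add hSC).bddAbove_range
  have hDsum : Summable fun k => D k ω :=
    summable_of_sum_range_le (fun k => hD0 k ω) fun k => by
      linarith [hA0 k ω, hA_eq k, hB ⟨k, rfl⟩]
  exact ⟨⟨_, ((hM.add hSC).sub hDsum.hasSum.tendsto_sum_nat).congr fun k => (hA_eq k).symm⟩,
    hDsum⟩

end MeasureTheory

open RobbinsSiegmund in
theorem robbins_siegmund_weighted_general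
    {Ω : Type*} {m0 : MeasurableSpace Ω} {μ : Measure Ω} [IsProbabilityMeasure μ]
    (ℱ : Filtration ℕ m0) (X Y Z : ℕ → Ω → ℝ) (k0 : ℕ) (c γ : ℝ)
    (hc : 0 < c) (hγ : 1 / 2 < γ ∧ γ ≤ 1) (hc6 : γ = 1 → 6 ≤ c)
    (haX : Adapted ℱ X) (haY : Adapted ℱ Y) (haZ : Adapted ℱ Z)
    (hXpos : ∀ k ω, 0 ≤ X k ω) (hYpos : ∀ k ω, 0 ≤ Y k ω)
    (hXint : ∀ k, Integrable (X k) μ) (hYint : ∀ k, Integrable (Y k) μ)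
    (hZint : ∀ k, Integrable (Z k) μ)
    (hrec : ∀ k, k0 ≤ k →
      μ[X (k + 1) | ℱ k] ≤ᵐ[μ]
        fun ω => (1 - c * (k : ℝ) ^ (-γ)) * X k ω - Y k ω + Z k ω) :
    ∀ᵐ ω ∂μ,
      (Summable fun k : ℕ =>
          ((k + 1 : ℝ) ^ (2 * γ - 1) / Real.log ((k : ℝ) + 2) ^ 2) * Z k ω) →
      (∃ V : ℝ, Tendsto
          (fun k : ℕ => ((k : ℝ) ^ (2 * γ - 1) / Real.log ((k : ℝ) + 1) ^ 2) * X k ω)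
          atTop (𝓝 V)) ∧
      Summable fun k : ℕ =>
        ((k + 1 : ℝ) ^ (2 * γ - 1) / Real.log ((k : ℝ) + 2) ^ 2) * Y k ω := by
  obtain ⟨K, hK⟩ := eventually_atTop.1
    ((eventually_one_sub_mul_weight_succ_le hc hγ hc6).and (eventually_ge_atTop k0))
  have hstep : ∀ k, μ[(fun ω => weight γ (K + k + 1) * X (K + k + 1) ω)|ℱ (K + k)] ≤ᵐ[μ]
      fun ω => weight γ (K + k) * X (K + k) ω - weight γ (K + k + 1) * Y (K + k) ω
        + weight γ (K + k + 1) * Z (K + k) ω := fun k =>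
    condExp_const_mul_le_of_le (weight_nonneg _ _) (hK _ (K.le_add_right k)).1 (hXpos _)
      (hrec _ ((hK K le_rfl).2.trans (K.le_add_right k)))
  have hRS := ae_tendsto_and_summable_of_condExp_le (𝒢 := ℱ.shift K) (μ := μ)
    (A := fun k ω => weight γ (K + k) * X (K + k) ω)
    (C := fun k ω => weight γ (K + k + 1) * Z (K + k) ω)
    (D := fun k ω => weight γ (K + k + 1) * Y (K + k) ω)
    (fun k => (haX _).stronglyMeasurable.const_mul _)
    (fun k => (haZ _).stronglyMeasurable.const_mul _)
    (fun k => (haY _).stronglyMeasurable.const_mul _)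
    (fun k ω => mul_nonneg (weight_nonneg _ _) (hXpos _ ω))
    (fun k ω => mul_nonneg (weight_nonneg _ _) (hYpos _ ω))
    (fun k => (hXint _).const_mul _) (fun k => (hZint _).const_mul _)
    (fun k => (hYint _).const_mul _) hstep
  filter_upwards [hRS] with ω hω hZ
  simp_rw [← weight_succ] at hZ ⊢
  obtain ⟨⟨L, hL⟩, hY⟩ := hω (by simpa only [add_comm K] using (summable_nat_add_iff K).2 hZ)
  refine ⟨⟨L, (tendsto_add_atTop_iff_nat (f := fun k => weight γ k * X k ω) K).1 ?_⟩,
    (summable_nat_add_iff K).1 ?_⟩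
  · simpa only [add_comm K] using hL
  · simpa only [add_comm K] using hY

/-- A Robbins–Siegmund-type lemma. Suppose nonnegative adapted integrable
processes `X, Y, Z` satisfy `E[X_{k+1} | F_k] ≤ (1 − c k^{−γ}) X_k − Y_k + Z_k` for `k ≥ k₀`,
with `γ ∈ (1/2, 1]` and `c ≥ 6` if `γ = 1`. With `a_k = k^{2γ−1}/(log(k+1))²`, almost surely on
the event `{∑ a_{k+1} Z_k < ∞}`, the sequence `a_k X_k` converges to a finite limit and
`∑ a_{k+1} Y_k < ∞`. -/
theorem robbins_siegmund_weighted
    {Ω : Type*} {m0 : MeasurableSpace Ω} {μ : Measure Ω} [IsProbabilityMeasure μ]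
    (ℱ : Filtration ℕ m0) (X Y Z : ℕ → Ω → ℝ) (k0 : ℕ) (c γ : ℝ)
    (hc : 0 < c) (hγ : 1 / 2 < γ ∧ γ ≤ 1) (hc6 : γ = 1 → 6 ≤ c)
    (haX : Adapted ℱ X) (haY : Adapted ℱ Y) (haZ : Adapted ℱ Z)
    (hXpos : ∀ k ω, 0 ≤ X k ω) (hYpos : ∀ k ω, 0 ≤ Y k ω) (hZpos : ∀ k ω, 0 ≤ Z k ω)
    (hXint : ∀ k, Integrable (X k) μ) (hYint : ∀ k, Integrable (Y k) μ)
    (hZint : ∀ k, Integrable (Z k) μ)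
    (hrec : ∀ k, k0 ≤ k →
      μ[X (k + 1) | ℱ k] ≤ᵐ[μ]
        fun ω => (1 - c * (k : ℝ) ^ (-γ)) * X k ω - Y k ω + Z k ω) :
    ∀ᵐ ω ∂μ,
      (Summable fun k : ℕ =>
          ((k + 1 : ℝ) ^ (2 * γ - 1) / Real.log ((k : ℝ) + 2) ^ 2) * Z k ω) →
      (∃ V : ℝ, Tendsto
          (fun k : ℕ => ((k : ℝ) ^ (2 * γ - 1) / Real.log ((k : ℝ) + 1) ^ 2) * X k ω)
          atTop (𝓝 V)) ∧
      Summable fun k : ℕ =>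
        ((k + 1 : ℝ) ^ (2 * γ - 1) / Real.log ((k : ℝ) + 2) ^ 2) * Y k ω :=
  robbins_siegmund_weighted_general ℱ X Y Z k0 c γ hc hγ hc6 haX haY haZ hXpos hYpos hXint hYint
    hZint hrec
end

section
/- Fix k₀ ∈ ℕ, c, C > 0, and γ ∈ (1/2, 1]. Suppose {s_k} is a nonnegative real sequence satisfying s_k ≤ c/(12γ) and s_{k+1}² ≤ s_k² − c k^{−γ} s_k + C k^{−2γ} for all k ≥ k₀. Then there exists a constant C_ub depending only on c, C, γ, k₀ such that s_k ≤ C_ub · k^{−γ} for all k ≥ 1. -/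
/-!
Once `s_k` is below `M k^{-γ}` it stays there. If `s_k ≤ (2C/c) k^{-γ}`, the recursion alone gives
`s_{k+1} = O(k^{-γ})`. Otherwise the noise term `C k^{-2γ}` is absorbed by half of the drift, so
`s_{k+1}² ≤ s_k² - (c/2) k^{-γ} s_k ≤ M(M - c/2) k^{-2γ}`, and Bernoulli's inequality
`(k/(k+1))^{2γ} ≥ 1 - 2γ/(k+1)` turns this into `s_{k+1} ≤ M (k+1)^{-γ}` as soon as
`k + 1 ≥ 4γM/c`. Starting the induction at `K ≈ 4γM/c` is possible because
`K^γ ≤ K ≤ 12γM/c`, so the a priori bound `s_K ≤ c/(12γ)` is below `M K^{-γ}`.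
-/

open Filter Real

theorem le_mul_of_sq_le_sq_sub_mul_add {c C T M e f a b : ℝ} (hc : 0 < c) (ha : 0 ≤ a)
    (he : 0 ≤ e) (hf : 0 ≤ f) (hT : 2 * C ≤ c * T) (hcM : c ≤ M) (hM : 2 * (T ^ 2 + C) ≤ M ^ 2)
    (hef : (2 * M - c) * e ^ 2 ≤ 2 * M * f ^ 2)
    (hb : b ^ 2 ≤ a ^ 2 - c * e * a + C * e ^ 2) (haM : a ≤ M * e) : b ≤ M * f := by
  refine le_of_sq_le_sq ?_ (by nlinarith)
  rcases le_or_gt a (T * e) with hsmall | hlarge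
  · have he2 : e ^ 2 ≤ 2 * f ^ 2 := by nlinarith
    nlinarith [mul_nonneg (mul_nonneg hc.le he) ha, mul_le_mul hsmall hsmall ha (ha.trans hsmall)]
  · have hCe : C * e ^ 2 ≤ c / 2 * e * a := by nlinarith [mul_nonneg hc.le he]
    -- `t ↦ t² - (c/2) e t` is convex, so on `[0, M e]` it is largest at an endpoint
    nlinarith [mul_nonneg (sub_nonneg.2 haM) (by nlinarith : 0 ≤ M * e + a - c / 2 * e)]

theorem one_sub_div_mul_rpow_neg_le {x p : ℝ} (hx : 0 < x) (hp : 1 ≤ p) :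
    (1 - p / (x + 1)) * x ^ (-p) ≤ (x + 1) ^ (-p) := by
  have hx1 : 0 < x + 1 := by linarith
  have bernoulli : 1 - p / (x + 1) ≤ (x / (x + 1)) ^ p := by
    have hs : -1 ≤ -(1 / (x + 1)) := by
      rw [neg_le_neg_iff, div_le_one hx1]; linarith
    convert one_add_mul_self_le_rpow_one_add hs hp using 2 <;> field_simp <;> ring
  calc (1 - p / (x + 1)) * x ^ (-p) ≤ (x / (x + 1)) ^ p * x ^ (-p) := by gcongr
    _ = (x + 1) ^ (-p) := by
      rw [div_rpow hx.le hx1.le, rpow_neg hx.le, rpow_neg hx1.le]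
      field_simp

theorem le_mul_rpow_neg_of_mul_le {a M x γ : ℝ} (hx : 1 ≤ x) (hγ : γ ≤ 1) (ha : 0 ≤ a)
    (h : a * x ≤ M) : a ≤ M * x ^ (-γ) := by
  have hxγ : x ^ γ ≤ x := by simpa using rpow_le_rpow_of_exponent_le hx hγ
  rw [rpow_neg (by positivity), ← div_eq_mul_inv, le_div_iff₀ (by positivity)]
  calc a * x ^ γ ≤ a * x := by gcongr
    _ ≤ M := h

theorem le_mul_rpow_neg_of_sq_le_sq_sub_mul_add {c C T M γ : ℝ} {s : ℕ → ℝ} {K : ℕ}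
    (hc : 0 < c) (hγ : 1 / 2 ≤ γ) (hs : ∀ k, 0 ≤ s k) (hT : 2 * C ≤ c * T) (hcM : c ≤ M)
    (hM : 2 * (T ^ 2 + C) ≤ M ^ 2) (hK : 0 < K) (hKM : 4 * γ * M ≤ c * (K + 1))
    (hrec : ∀ k, K ≤ k →
      s (k + 1) ^ 2 ≤ s k ^ 2 - c * (k : ℝ) ^ (-γ) * s k + C * (k : ℝ) ^ (-(2 * γ)))
    (hbase : s K ≤ M * (K : ℝ) ^ (-γ)) :
    ∀ k, K ≤ k → s k ≤ M * (k : ℝ) ^ (-γ) := by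
  intro k hk
  induction k, hk using Nat.le_induction with
  | base => exact hbase
  | succ k hk ih =>
    have hx : (0 : ℝ) < k := by exact_mod_cast hK.trans_le hk
    have hsq (y : ℝ) (hy : 0 ≤ y) : y ^ (-(2 * γ)) = (y ^ (-γ)) ^ 2 := by
      rw [← rpow_natCast, ← rpow_mul hy]; ring_nf
    have hMk : 4 * γ * M / (k + 1) ≤ c := by
      rw [div_le_iff₀ (by positivity)]
      have : (K : ℝ) ≤ k := by exact_mod_cast hk
      nlinarith
    have hratio : (2 * M - c) * ((k : ℝ) ^ (-γ)) ^ 2 ≤ 2 * M * (((k : ℝ) + 1) ^ (-γ)) ^ 2 := by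
      have bernoulli := one_sub_div_mul_rpow_neg_le hx (p := 2 * γ) (by linarith)
      rw [hsq _ hx.le, hsq _ (by positivity)] at bernoulli
      calc (2 * M - c) * ((k : ℝ) ^ (-γ)) ^ 2
          ≤ (2 * M - 4 * γ * M / (k + 1)) * ((k : ℝ) ^ (-γ)) ^ 2 := by gcongr
        _ = 2 * M * ((1 - 2 * γ / (k + 1)) * ((k : ℝ) ^ (-γ)) ^ 2) := by ring
        _ ≤ 2 * M * (((k : ℝ) + 1) ^ (-γ)) ^ 2 := by gcongr; linarith
    push_cast
    exact le_mul_of_sq_le_sq_sub_mul_add hc (hs k) (by positivity) (by positivity) hT hcM hM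
      hratio (hsq _ hx.le ▸ hrec k hk) ih

theorem exists_forall_le_mul_of_eventually_le {s w : ℕ → ℝ} {M : ℝ}
    (hw : ∀ k, 1 ≤ k → 0 < w k) (h : ∀ᶠ k in atTop, s k ≤ M * w k) :
    ∃ B, ∀ k, 1 ≤ k → s k ≤ B * w k := by
  obtain ⟨K, hK⟩ := eventually_atTop.1 h
  obtain ⟨B, hB⟩ := ((Set.finite_Iio K).image fun k => s k / w k).bddAbove
  refine ⟨max M B, fun k hk => ?_⟩
  rcases le_or_gt K k with hKk | hkK
  · exact (hK k hKk).trans (by gcongr; exacts [(hw k hk).le, le_max_left _ _])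
  · have : s k / w k ≤ B := hB ⟨k, hkK, rfl⟩
    rw [div_le_iff₀ (hw k hk)] at this
    exact this.trans (by gcongr; exacts [(hw k hk).le, le_max_right _ _])

theorem sequence_decay_of_squared_recursion_general
    (k0 : ℕ) (c C γ : ℝ) (hc : 0 < c) (hγ : 1 / 2 < γ ∧ γ ≤ 1)
    (s : ℕ → ℝ) (hpos : ∀ k, 0 ≤ s k)
    (hbd : ∀ k, k0 ≤ k → s k ≤ c / (12 * γ))
    (hrec : ∀ k, k0 ≤ k →
      s (k + 1) ^ 2 ≤ s k ^ 2 - c * (k : ℝ) ^ (-γ) * s k + C * (k : ℝ) ^ (-(2 * γ))) :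
    ∃ Cub : ℝ, ∀ k : ℕ, 1 ≤ k → s k ≤ Cub * (k : ℝ) ^ (-γ) := by
  obtain ⟨hγ1, hγ2⟩ := hγ
  set T := 2 * C / c
  set M := max (max c (2 * (T ^ 2 + C) / c)) (c * k0)
  have hcM : c ≤ M := (le_max_left _ _).trans (le_max_left _ _)
  have hM : 2 * (T ^ 2 + C) ≤ M ^ 2 := by
    have : 2 * (T ^ 2 + C) / c ≤ M := (le_max_right _ _).trans (le_max_left _ _)
    rw [div_le_iff₀ hc] at this
    nlinarith
  set K := ⌈4 * γ * M / c⌉₊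
  have hMK : 4 * γ * M ≤ c * K := by
    rw [← div_le_iff₀' hc]; exact Nat.le_ceil _
  have hKM : c * K < 4 * γ * M + c := calc
    c * K < c * (4 * γ * M / c + 1) := by gcongr; exact Nat.ceil_lt_add_one (by positivity)
    _ = 4 * γ * M + c := by field_simp
  have hk0K : k0 ≤ K := by
    have : c * k0 ≤ M := le_max_right _ _
    exact_mod_cast (show (k0 : ℝ) ≤ K by nlinarith)
  have hK : 0 < K := Nat.ceil_pos.2 (by positivity)
  have hbase : s K ≤ M * (K : ℝ) ^ (-γ) :=
    (hbd K hk0K).trans <| le_mul_rpow_neg_of_mul_le (by exact_mod_cast hK) hγ2 (by positivity)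
      (by rw [div_mul_eq_mul_div, div_le_iff₀ (by positivity)]; nlinarith)
  refine exists_forall_le_mul_of_eventually_le (fun k hk => by positivity)
    (eventually_atTop.2 ⟨K, le_mul_rpow_neg_of_sq_le_sq_sub_mul_add hc hγ1.le hpos
      (by simp [T, mul_div_cancel₀ _ hc.ne']) hcM hM hK (by linarith)
      (fun k hk => hrec k (hk0K.trans hk)) hbase⟩)

/-- Deterministic sequence lemma: if a nonnegative sequence satisfies
`s_k ≤ c/(12γ)` and `s_{k+1}² ≤ s_k² − c k^{−γ} s_k + C k^{−2γ}` for all `k ≥ k₀`, with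
`γ ∈ (1/2, 1]`, then `s_k ≤ C_ub · k^{−γ}` for all `k ≥ 1` and some constant `C_ub`. -/
theorem sequence_decay_of_squared_recursion
    (k0 : ℕ) (c C γ : ℝ) (hc : 0 < c) (hC : 0 < C) (hγ : 1 / 2 < γ ∧ γ ≤ 1)
    (s : ℕ → ℝ) (hpos : ∀ k, 0 ≤ s k)
    (hbd : ∀ k, k0 ≤ k → s k ≤ c / (12 * γ))
    (hrec : ∀ k, k0 ≤ k →
      s (k + 1) ^ 2 ≤ s k ^ 2 - c * (k : ℝ) ^ (-γ) * s k + C * (k : ℝ) ^ (-(2 * γ))) :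
    ∃ Cub : ℝ, ∀ k : ℕ, 1 ≤ k → s k ≤ Cub * (k : ℝ) ^ (-γ) :=
  sequence_decay_of_squared_recursion_general k0 c C γ hc hγ s hpos hbd hrec
end

section
/- Let f : ℝ^d → ℝ be a ρ-weakly convex function and M a C¹ manifold contained in a neighborhood of x̄ with x̄ ∈ M, such that M is an active manifold for f at x̄ with 0 ∈ ∂̂f(x̄), so that f(y) − f(P_M(y)) ≥ μ·dist(y, M) for all y near x̄ and some μ > 0. Then for all y near x̄ and all v ∈ ∂f(y): ⟨v, y − P_M(y)⟩ ≥ (μ/2)·dist(y, M). -/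
open Filter Topology Metric
open scoped RealInnerProductSpace

variable {E : Type*} [NormedAddCommGroup E] [InnerProductSpace ℝ E]

/-- The Fréchet subdifferential of `f : E → ℝ` at `x`. -/
def frechetSubdiff (f : E → ℝ) (x : E) : Set E :=
  {v | ∀ ε > 0, ∃ δ > 0, ∀ y : E, ‖y - x‖ < δ →
    f x + ⟪v, y - x⟫ - ε * ‖y - x‖ ≤ f y}

/-- The limiting subdifferential of `f : E → ℝ` at `x`. -/
def limitingSubdiff (f : E → ℝ) (x : E) : Set E :=
  {v | ∃ xs vs : ℕ → E, (∀ n, vs n ∈ frechetSubdiff f (xs n)) ∧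
    Tendsto xs atTop (𝓝 x) ∧ Tendsto (fun n => f (xs n)) atTop (𝓝 (f x)) ∧
    Tendsto vs atTop (𝓝 v)}

theorem mul_le_of_le_div_add_one {ρ d μ : ℝ} (hρ : 0 ≤ ρ) (hd₀ : 0 ≤ d)
    (hd : d ≤ μ / (ρ + 1)) : ρ * d ≤ μ := by
  rw [le_div_iff₀ (by linarith)] at hd
  nlinarith

theorem half_mul_le_mul_sub_half_mul_sq {ρ d μ : ℝ} (hd₀ : 0 ≤ d) (hρd : ρ * d ≤ μ) :
    μ / 2 * d ≤ μ * d - ρ / 2 * d ^ 2 := by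
  nlinarith

theorem sub_sub_half_mul_sq_le_inner {f : E → ℝ} {ρ : ℝ} {y p v : E}
    (h : f y + ⟪v, p - y⟫ - ρ / 2 * ‖p - y‖ ^ 2 ≤ f p) :
    f y - f p - ρ / 2 * ‖y - p‖ ^ 2 ≤ ⟪v, y - p⟫ := by
  rw [← neg_sub y p, inner_neg_right, norm_neg] at h
  linarith

/-- Let `f` be `ρ`-weakly convex (subgradients give quadratic minorants) and
`M ∋ x̄` an active manifold along which the sharp growth
`f(y) − f(P_M(y)) ≥ μ·dist(y, M)` holds for `y` near `x̄`. Then for all `y` near `x̄`, nearest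
points `p = P_M(y)`, and `v ∈ ∂f(y)`, one has `⟪v, y − p⟫ ≥ (μ/2)·dist(y, M)`. -/
theorem weaklyConvex_proximal_aiming
    (f : E → ℝ) (ρ : ℝ) (hρ : 0 ≤ ρ)
    (hwc : ∀ y z : E, ∀ v ∈ limitingSubdiff f y,
      f y + ⟪v, z - y⟫ - ρ / 2 * ‖z - y‖ ^ 2 ≤ f z)
    (M : Set E) (xbar : E) (hx : xbar ∈ M)
    (μ ε : ℝ) (hμ : 0 < μ) (hε : 0 < ε)
    (hgrowth : ∀ y ∈ ball xbar ε, ∀ p ∈ M, ‖y - p‖ = infDist y M →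
      μ * infDist y M ≤ f y - f p) :
    ∃ δ > 0, ∀ y ∈ ball xbar δ, ∀ p ∈ M, ‖y - p‖ = infDist y M →
      ∀ v ∈ limitingSubdiff f y, μ / 2 * infDist y M ≤ ⟪v, y - p⟫ := by
  refine ⟨min ε (μ / (ρ + 1)), lt_min hε (by positivity), ?_⟩
  intro y hy p hp hdist v hv
  have hd : infDist y M < μ / (ρ + 1) :=
    (infDist_le_dist_of_mem hx).trans_lt (hy.trans_le (min_le_right _ _))
  have hρd : ρ * infDist y M ≤ μ := mul_le_of_le_div_add_one hρ infDist_nonneg hd.le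
  calc μ / 2 * infDist y M ≤ μ * infDist y M - ρ / 2 * infDist y M ^ 2 :=
        half_mul_le_mul_sub_half_mul_sq infDist_nonneg hρd
    _ ≤ f y - f p - ρ / 2 * ‖y - p‖ ^ 2 := by
        rw [hdist]
        linarith [hgrowth y (ball_subset_ball (min_le_left _ _) hy) p hp hdist]
    _ ≤ ⟪v, y - p⟫ := sub_sub_half_mul_sq_le_inner (hwc y p v hv)
end

section
/- Let λ : S^n → ℝ^n map a symmetric matrix to its eigenvalues in nonincreasing order, and let Y ⊆ ℝ^n be a closed symmetric set (invariant under coordinate permutations), with P_Y denoting the nearest-point projection onto Y. Let X ∈ S^n, let w ∈ P_Y(λ(X)), and let U be orthogonal with X = U Diag(λ(X)) Uᵀ. Then the matrix Z = U Diag(w') Uᵀ, where w' is w sorted in nonincreasing order, satisfies Z ∈ λ^{-1}(Y) and ‖X − Z‖_F = dist(λ(X), Y); in particular dist(X, λ^{-1}(Y)) = dist(λ(X), Y). -/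
noncomputable section

/-- Euclidean norm of a vector in `Fin n → ℝ`. -/
def vnorm (n : ℕ) (v : Fin n → ℝ) : ℝ := Real.sqrt (∑ i, v i ^ 2)

/-- Frobenius norm of a square matrix. -/
def frobNorm (n : ℕ) (A : Matrix (Fin n) (Fin n) ℝ) : ℝ :=
  Real.sqrt (∑ i, ∑ j, A i j ^ 2)

/-- The spectral set `λ⁻¹(Y)` induced by a set of eigenvalue vectors `Y`: symmetric matrices
whose eigenvalue vector (in some orthonormal eigenbasis) lies in `Y`. -/
def specSet (n : ℕ) (Y : Set (Fin n → ℝ)) : Set (Matrix (Fin n) (Fin n) ℝ) :=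
  {A | ∃ (V : Matrix (Fin n) (Fin n) ℝ) (e : Fin n → ℝ),
    V * V.transpose = 1 ∧ e ∈ Y ∧ A = V * Matrix.diagonal e * V.transpose}

open Finset

/-- Telescoping decomposition of a vector. -/
lemma spf_tele {n : ℕ} (d : Fin n → ℝ) (i : Fin n) :
    d i = ∑ k : Fin n, (if i ≤ k then
      (d k - (if h : (k:ℕ)+1 < n then d ⟨(k:ℕ)+1, h⟩ else 0)) else 0) := by
  set D : ℕ → ℝ := fun k => if h : k < n then d ⟨k, h⟩ else 0 with hD
  have h1 : ∀ k : Fin n, (if i ≤ k then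
      (d k - (if h : (k:ℕ)+1 < n then d ⟨(k:ℕ)+1, h⟩ else 0)) else 0)
      = (fun m : ℕ => if (i:ℕ) ≤ m then D m - D (m+1) else 0) (k:ℕ) := by
    intro k
    simp only [hD, Fin.le_def]
    rw [dif_pos k.isLt]
  have h3 : ∑ k : Fin n, (fun m : ℕ => if (i:ℕ) ≤ m then D m - D (m+1) else 0) (k:ℕ)
      = ∑ m ∈ range n, (if (i:ℕ) ≤ m then D m - D (m+1) else 0) :=
    by exact Fin.sum_univ_eq_sum_range (fun m : ℕ => if (i:ℕ) ≤ m then D m - D (m+1) else 0) n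
  rw [Finset.sum_congr rfl (fun k _ => h1 k), h3, ← Finset.sum_filter]
  have h2 : (range n).filter (fun m => (i:ℕ) ≤ m) = Ico (i:ℕ) n := by
    ext m; simp [Finset.mem_Ico, and_comm]
  rw [h2, Finset.sum_Ico_eq_sub _ (le_of_lt i.isLt),
    Finset.sum_range_sub' D, Finset.sum_range_sub' D]
  have hDn : D n = 0 := by simp [hD]
  have hDi : D (i:ℕ) = d i := by simp [hD, i.isLt]
  rw [hDn, hDi]; ring

/-- Key inequality: for a doubly stochastic weighting and two nonincreasing vectors,
the weighted cross sum is at most the aligned sum. -/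
lemma spf_key {n : ℕ} (s : Fin n → Fin n → ℝ) (hs : ∀ i j, 0 ≤ s i j)
    (hrow : ∀ i, ∑ j, s i j = 1) (hcol : ∀ j, ∑ i, s i j = 1)
    (d e : Fin n → ℝ) (hd : Antitone d) (he : Antitone e) :
    ∑ i, ∑ j, s i j * (d i * e j) ≤ ∑ i, d i * e i := by
  classical
  set χ : Fin n → Fin n → ℝ := fun i k => if i ≤ k then 1 else 0 with hχ
  set c : Fin n → ℝ := fun k => d k - (if h : (k:ℕ)+1 < n then d ⟨(k:ℕ)+1, h⟩ else 0) with hc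
  set c' : Fin n → ℝ := fun l => e l - (if h : (l:ℕ)+1 < n then e ⟨(l:ℕ)+1, h⟩ else 0) with hc'
  have hdec : ∀ i, d i = ∑ k, χ i k * c k := by
    intro i
    rw [spf_tele d i]
    refine sum_congr rfl fun k _ => ?_
    by_cases h : i ≤ k <;> simp [hχ, hc, h]
  have hdec' : ∀ j, e j = ∑ l, χ j l * c' l := by
    intro j
    rw [spf_tele e j]
    refine sum_congr rfl fun l _ => ?_
    by_cases h : j ≤ l <;> simp [hχ, hc', h]
  have swap_inner : ∀ (G : Fin n → Fin n → ℝ), ∑ a, ∑ b, G a b = ∑ b, ∑ a, G a b :=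
    by intro G; exact Finset.sum_comm
  have swap4 : ∀ (F : Fin n → Fin n → Fin n → Fin n → ℝ),
      ∑ i, ∑ j, ∑ k, ∑ l, F i j k l = ∑ k, ∑ l, ∑ i, ∑ j, F i j k l := by
    intro F
    calc ∑ i, ∑ j, ∑ k, ∑ l, F i j k l
        = ∑ i, ∑ k, ∑ j, ∑ l, F i j k l := sum_congr rfl fun i _ => swap_inner _
      _ = ∑ k, ∑ i, ∑ j, ∑ l, F i j k l := swap_inner _
      _ = ∑ k, ∑ i, ∑ l, ∑ j, F i j k l :=
          sum_congr rfl fun k _ => sum_congr rfl fun i _ => swap_inner _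
      _ = ∑ k, ∑ l, ∑ i, ∑ j, F i j k l := sum_congr rfl fun k _ => swap_inner _
  set T : Fin n → Fin n → ℝ := fun k l => ∑ i, ∑ j, χ i k * χ j l * s i j with hT
  set m : Fin n → Fin n → ℝ := fun k l => ∑ i, χ i k * χ i l with hm
  have hLHS : ∑ i, ∑ j, s i j * (d i * e j) = ∑ k, ∑ l, (c k * c' l) * T k l := by
    calc ∑ i, ∑ j, s i j * (d i * e j)
        = ∑ i, ∑ j, ∑ k, ∑ l, (c k * c' l) * (χ i k * χ j l * s i j) := by
          refine sum_congr rfl fun i _ => sum_congr rfl fun j _ => ?_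
          rw [hdec i, hdec' j, Finset.sum_mul_sum]
          rw [Finset.mul_sum]
          refine sum_congr rfl fun k _ => ?_
          rw [Finset.mul_sum]
          refine sum_congr rfl fun l _ => ?_
          ring
      _ = ∑ k, ∑ l, ∑ i, ∑ j, (c k * c' l) * (χ i k * χ j l * s i j) := swap4 _
      _ = ∑ k, ∑ l, (c k * c' l) * T k l := by
          refine sum_congr rfl fun k _ => sum_congr rfl fun l _ => ?_
          simp only [hT]
          rw [Finset.mul_sum]
          refine sum_congr rfl fun i _ => ?_
          rw [Finset.mul_sum]
  have hRHS : ∑ i, d i * e i = ∑ k, ∑ l, (c k * c' l) * m k l := by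
    calc ∑ i, d i * e i
        = ∑ i, ∑ k, ∑ l, (c k * c' l) * (χ i k * χ i l) := by
          refine sum_congr rfl fun i _ => ?_
          rw [hdec i, hdec' i, Finset.sum_mul_sum]
          refine sum_congr rfl fun k _ => ?_
          refine sum_congr rfl fun l _ => ?_
          ring
      _ = ∑ k, ∑ i, ∑ l, (c k * c' l) * (χ i k * χ i l) := swap_inner _
      _ = ∑ k, ∑ l, ∑ i, (c k * c' l) * (χ i k * χ i l) :=
          sum_congr rfl fun k _ => swap_inner _
      _ = ∑ k, ∑ l, (c k * c' l) * m k l := by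
          refine sum_congr rfl fun k _ => sum_congr rfl fun l _ => ?_
          simp only [hm]
          rw [Finset.mul_sum]
  rw [hLHS, hRHS]
  refine Finset.sum_le_sum fun k _ => Finset.sum_le_sum fun l _ => ?_
  have hχ01 : ∀ a b : Fin n, 0 ≤ χ a b ∧ χ a b ≤ 1 := by
    intro a b; by_cases h : a ≤ b <;> simp [hχ, h]
  have hTtop_k : ∀ l₀ : Fin n, ¬((k:ℕ)+1 < n) → T k l₀ = m k l₀ := by
    intro l₀ hk
    have hktop : ∀ i : Fin n, i ≤ k := by
      intro i
      have : (k:ℕ) = n - 1 := by omega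
      rw [Fin.le_def, this]
      omega
    have h1 : T k l₀ = ∑ j, χ j l₀ := by
      simp only [hT]
      rw [swap_inner]
      refine sum_congr rfl fun j _ => ?_
      have : ∀ i, χ i k * χ j l₀ * s i j = χ j l₀ * s i j := by
        intro i; rw [hχ]; simp [hktop i]
      rw [Finset.sum_congr rfl (fun i _ => this i), ← Finset.mul_sum, hcol j, mul_one]
    have h2 : m k l₀ = ∑ i, χ i l₀ := by
      simp only [hm]
      refine sum_congr rfl fun i _ => ?_
      rw [hχ]; simp [hktop i]
    rw [h1, h2]
  have hTtop_l : ¬((l:ℕ)+1 < n) → T k l = m k l := by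
    intro hl
    have hltop : ∀ j : Fin n, j ≤ l := by
      intro j
      have : (l:ℕ) = n - 1 := by omega
      rw [Fin.le_def, this]
      omega
    have h1 : T k l = ∑ i, χ i k := by
      simp only [hT]
      refine sum_congr rfl fun i _ => ?_
      have : ∀ j, χ i k * χ j l * s i j = χ i k * s i j := by
        intro j; rw [hχ]; simp [hltop j]
      rw [Finset.sum_congr rfl (fun j _ => this j), ← Finset.mul_sum, hrow i, mul_one]
    have h2 : m k l = ∑ i, χ i k := by
      simp only [hm]
      refine sum_congr rfl fun i _ => ?_
      rw [hχ]; simp [hltop i]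
    rw [h1, h2]
  have hTle : T k l ≤ m k l := by
    rcases le_total k l with h | h
    · have h2 : m k l = ∑ i, χ i k := by
        simp only [hm]
        refine sum_congr rfl fun i _ => ?_
        by_cases hik : i ≤ k
        · simp [hχ, hik, le_trans hik h]
        · simp [hχ, hik]
      rw [h2]
      simp only [hT]
      have : ∀ i : Fin n, ∑ j, χ i k * χ j l * s i j ≤ χ i k := by
        intro i
        calc ∑ j, χ i k * χ j l * s i j ≤ ∑ j, χ i k * s i j := by
              refine Finset.sum_le_sum fun j _ => ?_
              have h0 := hχ01 i k
              have h0' := hχ01 j l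
              have h1 : χ i k * χ j l * s i j = (χ i k * s i j) * χ j l := by ring
              rw [h1]
              exact mul_le_of_le_one_right (mul_nonneg h0.1 (hs i j)) h0'.2
          _ = χ i k := by rw [← Finset.mul_sum, hrow i, mul_one]
      exact Finset.sum_le_sum fun i _ => this i
    · have h2 : m k l = ∑ i, χ i l := by
        simp only [hm]
        refine sum_congr rfl fun i _ => ?_
        by_cases hil : i ≤ l
        · simp [hχ, hil, le_trans hil h]
        · simp [hχ, hil]
      rw [h2]
      simp only [hT]
      rw [swap_inner]
      calc ∑ j, ∑ i, χ i k * χ j l * s i j ≤ ∑ j, ∑ i, χ j l * s i j := by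
            refine Finset.sum_le_sum fun j _ => Finset.sum_le_sum fun i _ => ?_
            have h0 := hχ01 i k
            have h0' := hχ01 j l
            have h1 : χ i k * χ j l * s i j = (χ j l * s i j) * χ i k := by ring
            rw [h1]
            exact mul_le_of_le_one_right (mul_nonneg h0'.1 (hs i j)) h0.2
        _ = ∑ j, χ j l := by
            refine sum_congr rfl fun j _ => ?_
            rw [← Finset.mul_sum, hcol j, mul_one]
        _ = ∑ i : Fin n, χ i l := rfl
  by_cases hk : (k:ℕ)+1 < n
  · by_cases hl : (l:ℕ)+1 < n
    · have hck : 0 ≤ c k := by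
        have : d ⟨(k:ℕ)+1, hk⟩ ≤ d k := hd (by simp [Fin.le_def])
        simp only [hc, dif_pos hk]
        linarith
      have hcl : 0 ≤ c' l := by
        have : e ⟨(l:ℕ)+1, hl⟩ ≤ e l := he (by simp [Fin.le_def])
        simp only [hc', dif_pos hl]
        linarith
      exact mul_le_mul_of_nonneg_left hTle (mul_nonneg hck hcl)
    · rw [hTtop_l hl]
  · rw [hTtop_k l hk]



/-- Reverse a sqrt inequality on nonnegative reals. -/
lemma spf_sq_of_sqrt {x y : ℝ} (hx : 0 ≤ x) (hy : 0 ≤ y)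
    (h : Real.sqrt x ≤ Real.sqrt y) : x ≤ y := by
  nlinarith [Real.sq_sqrt hx, Real.sq_sqrt hy, Real.sqrt_nonneg x, Real.sqrt_nonneg y]

/-- Expansion of a squared-difference sum. -/
lemma spf_expand {n : ℕ} (a b : Fin n → ℝ) :
    ∑ i, (a i - b i) ^ 2 = ∑ i, a i ^ 2 + ∑ i, b i ^ 2 - 2 * ∑ i, a i * b i := by
  have h : ∀ i, (a i - b i) ^ 2 = (a i ^ 2 + b i ^ 2) - 2 * (a i * b i) := by
    intro i; ring
  rw [Finset.sum_congr rfl fun i _ => h i, Finset.sum_sub_distrib,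
    Finset.sum_add_distrib, ← Finset.mul_sum]

/-- Squared Frobenius norm of a diagonal matrix. -/
lemma spf_F2_diagonal {n : ℕ} (v : Fin n → ℝ) :
    ∑ i, ∑ j, (Matrix.diagonal v) i j ^ 2 = ∑ i, v i ^ 2 := by
  refine Finset.sum_congr rfl fun i _ => ?_
  rw [Finset.sum_eq_single i]
  · rw [Matrix.diagonal_apply_eq]
  · intro j _ hji
    rw [Matrix.diagonal_apply_ne' v hji]
    ring
  · intro h; exact absurd (Finset.mem_univ i) h

/-- Squared Frobenius norm as a trace. -/
lemma spf_F2_trace {n : ℕ} (A : Matrix (Fin n) (Fin n) ℝ) :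
    ∑ i, ∑ j, A i j ^ 2 = Matrix.trace (A * A.transpose) := by
  simp [Matrix.trace, Matrix.mul_apply, Matrix.diag, sq]

/-- Invariance of the squared Frobenius norm under orthogonal conjugation. -/
lemma spf_conj {n : ℕ} (U : Matrix (Fin n) (Fin n) ℝ) (hU : U * U.transpose = 1)
    (M : Matrix (Fin n) (Fin n) ℝ) :
    ∑ i, ∑ j, (U * M * U.transpose) i j ^ 2 = ∑ i, ∑ j, M i j ^ 2 := by
  have hUo : U.transpose * U = 1 := mul_eq_one_comm.mp hU
  rw [spf_F2_trace, spf_F2_trace]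
  have h1 : (U * M * U.transpose) * (U * M * U.transpose).transpose
      = U * (M * M.transpose) * U.transpose := by
    simp only [Matrix.transpose_mul, Matrix.transpose_transpose]
    calc U * M * U.transpose * (U * (M.transpose * U.transpose))
        = U * M * (U.transpose * U) * (M.transpose * U.transpose) := by
          simp only [Matrix.mul_assoc]
      _ = U * (M * M.transpose) * U.transpose := by
          rw [hUo]
          simp only [Matrix.mul_one, Matrix.mul_assoc]
  rw [h1, Matrix.trace_mul_comm, ← Matrix.mul_assoc, ← Matrix.mul_assoc, hUo,
    Matrix.one_mul]

/-- Let `Y ⊆ ℝⁿ` be closed and symmetric (permutation invariant), and let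
`X = U Diag(d) Uᵀ` be symmetric with ordered (nonincreasing) eigenvalue vector `d = λ(X)`.
Let `w` be a nearest point of `d` in `Y` and `w'` the nonincreasing rearrangement of `w`.
Then `Z = U Diag(w') Uᵀ` belongs to the spectral set `λ⁻¹(Y)`, satisfies
`‖X − Z‖_F = ‖d − w‖ = dist(λ(X), Y)`, and is a nearest point of `X` in `λ⁻¹(Y)`; in
particular `dist(X, λ⁻¹(Y)) = dist(λ(X), Y)`. -/
theorem spectral_projection_formula (n : ℕ)
    (Y : Set (Fin n → ℝ)) (hYclosed : IsClosed Y)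
    (hYsym : ∀ σ : Equiv.Perm (Fin n), ∀ y ∈ Y, (fun i => y (σ i)) ∈ Y)
    (Xm U : Matrix (Fin n) (Fin n) ℝ) (d : Fin n → ℝ)
    (hd : Antitone d) (hU : U * U.transpose = 1)
    (hX : Xm = U * Matrix.diagonal d * U.transpose)
    (w : Fin n → ℝ) (hw : w ∈ Y)
    (hwnear : ∀ u ∈ Y, vnorm n (fun i => d i - w i) ≤ vnorm n (fun i => d i - u i))
    (w' : Fin n → ℝ) (hw' : Antitone w')
    (hperm : ∃ σ : Equiv.Perm (Fin n), ∀ i, w' i = w (σ i)) :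
    ∀ Z : Matrix (Fin n) (Fin n) ℝ, Z = U * Matrix.diagonal w' * U.transpose →
      Z ∈ specSet n Y ∧
      frobNorm n (Xm - Z) = vnorm n (fun i => d i - w i) ∧
      ∀ W ∈ specSet n Y, frobNorm n (Xm - Z) ≤ frobNorm n (Xm - W) := by
  intro Z hZ
  obtain ⟨σ, hσ⟩ := hperm
  have hw'eq : w' = fun i => w (σ i) := funext hσ
  have hw'Y : w' ∈ Y := by rw [hw'eq]; exact hYsym σ w hw
  have hUo : U.transpose * U = 1 := mul_eq_one_comm.mp hU
  -- Part 1
  have part1 : Z ∈ specSet n Y := ⟨U, w', hU, hw'Y, hZ⟩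
  -- squared norms are sums of squares, hence nonneg
  have hnn : ∀ v : Fin n → ℝ, (0:ℝ) ≤ ∑ i, v i ^ 2 := by
    intro v; exact Finset.sum_nonneg fun i _ => sq_nonneg _
  -- Part 2 computation
  have hXZ : Xm - Z = U * Matrix.diagonal (fun i => d i - w' i) * U.transpose := by
    rw [hX, hZ]
    have hdd : Matrix.diagonal (fun i => d i - w' i)
        = Matrix.diagonal d - Matrix.diagonal w' := by
      rw [← Matrix.diagonal_sub]
    rw [hdd, Matrix.mul_sub, Matrix.sub_mul]
  have hF2Z : ∑ i, ∑ j, (Xm - Z) i j ^ 2 = ∑ i, (d i - w' i) ^ 2 := by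
    rw [hXZ, spf_conj U hU, spf_F2_diagonal]
  have hsum_w'2 : ∑ i, w' i ^ 2 = ∑ i, w i ^ 2 := by
    calc ∑ i, w' i ^ 2 = ∑ i, (fun j => w j ^ 2) (σ i) :=
          Finset.sum_congr rfl fun i _ => by rw [hσ i]
      _ = ∑ i, w i ^ 2 := Equiv.sum_comp σ (fun j => w j ^ 2)
  have hmono : Monovary d w' := by
    intro i j h
    rcases le_total i j with hij | hij
    · exact absurd (hw' hij) (not_le.mpr h)
    · exact hd hij
  have hrearr : ∑ i, d i * w i ≤ ∑ i, d i * w' i := by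
    have h1 : ∑ i, d i * w i = ∑ i, d i * w' (σ⁻¹ i) := by
      refine Finset.sum_congr rfl fun i _ => ?_
      rw [hσ (σ⁻¹ i)]; simp
    rw [h1]
    exact hmono.sum_mul_comp_perm_le_sum_mul
  have hle1 : ∑ i, (d i - w' i) ^ 2 ≤ ∑ i, (d i - w i) ^ 2 := by
    rw [spf_expand, spf_expand, hsum_w'2]
    linarith
  have hle2 : ∑ i, (d i - w i) ^ 2 ≤ ∑ i, (d i - w' i) ^ 2 :=
    spf_sq_of_sqrt (hnn _) (hnn _) (hwnear w' hw'Y)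
  have hsq_eq : ∑ i, (d i - w' i) ^ 2 = ∑ i, (d i - w i) ^ 2 := le_antisymm hle1 hle2
  have part2 : frobNorm n (Xm - Z) = vnorm n (fun i => d i - w i) := by
    simp only [frobNorm, vnorm]
    rw [hF2Z, hsq_eq]
  refine ⟨part1, part2, ?_⟩
  -- Part 3
  intro W hW
  obtain ⟨V, e, hV, heY, hWeq⟩ := hW
  set Q := U.transpose * V with hQ
  have hQQt : Q * Q.transpose = 1 := by
    rw [hQ, Matrix.transpose_mul, Matrix.transpose_transpose]
    calc U.transpose * V * (V.transpose * U)
        = U.transpose * (V * V.transpose) * U := by simp only [Matrix.mul_assoc]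
      _ = 1 := by rw [hV, Matrix.mul_one, hUo]
  have hQtQ : Q.transpose * Q = 1 := mul_eq_one_comm.mp hQQt
  set s : Fin n → Fin n → ℝ := fun i j => Q i j ^ 2 with hs_def
  have hs : ∀ i j, 0 ≤ s i j := fun i j => sq_nonneg _
  have hrow : ∀ i, ∑ j, s i j = 1 := by
    intro i
    calc ∑ j, s i j = (Q * Q.transpose) i i := by
          simp [hs_def, Matrix.mul_apply, Matrix.transpose_apply, sq]
      _ = 1 := by rw [hQQt, Matrix.one_apply_eq]
  have hcol : ∀ j, ∑ i, s i j = 1 := by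
    intro j
    calc ∑ i, s i j = (Q.transpose * Q) j j := by
          simp [hs_def, Matrix.mul_apply, Matrix.transpose_apply, sq]
      _ = 1 := by rw [hQtQ, Matrix.one_apply_eq]
  set B := Q * Matrix.diagonal e * Q.transpose with hB
  have hXW : Xm - W = U * (Matrix.diagonal d - B) * U.transpose := by
    rw [hX, hWeq, Matrix.mul_sub, Matrix.sub_mul]
    congr 1
    rw [hB, hQ, Matrix.transpose_mul, Matrix.transpose_transpose]
    symm
    calc U * (U.transpose * V * Matrix.diagonal e * (V.transpose * U)) * U.transpose
        = (U * U.transpose) * (V * Matrix.diagonal e * V.transpose) * (U * U.transpose) := by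
          simp only [Matrix.mul_assoc]
      _ = V * Matrix.diagonal e * V.transpose := by
          rw [hU, Matrix.one_mul, Matrix.mul_one]
  have hBsymm : B.transpose = B := by
    rw [hB]
    simp only [Matrix.transpose_mul, Matrix.transpose_transpose,
      Matrix.diagonal_transpose, Matrix.mul_assoc]
  have htraceDB : Matrix.trace (Matrix.diagonal d * B) = ∑ i, ∑ j, s i j * (d i * e j) := by
    have hBii : ∀ i, B i i = ∑ j, (Q i j * e j) * Q i j := by
      intro i
      rw [hB, Matrix.mul_apply]
      refine Finset.sum_congr rfl fun j _ => ?_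
      rw [Matrix.mul_diagonal, Matrix.transpose_apply]
    have h1 : ∀ i, (Matrix.diagonal d * B) i i = d i * B i i := by
      intro i; rw [Matrix.diagonal_mul]
    calc Matrix.trace (Matrix.diagonal d * B) = ∑ i, d i * B i i :=
          Finset.sum_congr rfl fun i _ => h1 i
      _ = ∑ i, ∑ j, s i j * (d i * e j) := by
          refine Finset.sum_congr rfl fun i _ => ?_
          rw [hBii i, Finset.mul_sum]
          refine Finset.sum_congr rfl fun j _ => ?_
          simp only [hs_def]; ring
  have htraceBB : Matrix.trace (B * B) = ∑ i, e i ^ 2 := by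
    have h1 : B * B = Q * (Matrix.diagonal e * Matrix.diagonal e) * Q.transpose := by
      rw [hB]
      calc Q * Matrix.diagonal e * Q.transpose * (Q * Matrix.diagonal e * Q.transpose)
          = Q * Matrix.diagonal e * (Q.transpose * Q) * (Matrix.diagonal e * Q.transpose) := by
            simp only [Matrix.mul_assoc]
        _ = Q * (Matrix.diagonal e * Matrix.diagonal e) * Q.transpose := by
            rw [hQtQ, Matrix.mul_one]
            simp only [Matrix.mul_assoc]
    rw [h1, Matrix.trace_mul_comm, ← Matrix.mul_assoc, hQtQ, Matrix.one_mul,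
      Matrix.diagonal_mul_diagonal, Matrix.trace_diagonal]
    refine Finset.sum_congr rfl fun i _ => ?_
    simp [sq]
  have hF2W : ∑ i, ∑ j, (Xm - W) i j ^ 2
      = ∑ i, d i ^ 2 + ∑ i, e i ^ 2 - 2 * ∑ i, ∑ j, s i j * (d i * e j) := by
    rw [hXW, spf_conj U hU, spf_F2_trace]
    have hsub : (Matrix.diagonal d - B).transpose = Matrix.diagonal d - B := by
      rw [Matrix.transpose_sub, Matrix.diagonal_transpose, hBsymm]
    rw [hsub, Matrix.sub_mul, Matrix.mul_sub, Matrix.mul_sub, Matrix.trace_sub,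
      Matrix.trace_sub, Matrix.trace_sub, Matrix.diagonal_mul_diagonal,
      Matrix.trace_diagonal, Matrix.trace_mul_comm B (Matrix.diagonal d), htraceDB,
      htraceBB]
    have hdd2 : ∑ i, d i * d i = ∑ i, d i ^ 2 := Finset.sum_congr rfl fun i _ => (sq (d i)).symm
    rw [hdd2]; ring
  -- sort e into nonincreasing order
  set π : Equiv.Perm (Fin n) := Fin.revPerm.trans (Tuple.sort e) with hπ
  set e' : Fin n → ℝ := fun i => e (π i) with he'def
  have he'Y : e' ∈ Y := hYsym π e heY
  have he' : Antitone e' := by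
    intro a b hab
    have h1 : Fin.rev b ≤ Fin.rev a := Fin.rev_le_rev.mpr hab
    have h2 := Tuple.monotone_sort e h1
    simpa [he'def, hπ, Equiv.trans_apply] using h2
  have hsum_e'2 : ∑ i, e' i ^ 2 = ∑ i, e i ^ 2 := Equiv.sum_comp π (fun j => e j ^ 2)
  have hcross : ∑ i, ∑ j, s i j * (d i * e j)
      = ∑ i, ∑ j, s i (π j) * (d i * e' j) := by
    refine Finset.sum_congr rfl fun i _ => ?_
    exact (Equiv.sum_comp π (fun j => s i j * (d i * e j))).symm
  have hkey : ∑ i, ∑ j, s i (π j) * (d i * e' j) ≤ ∑ i, d i * e' i := by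
    refine spf_key (fun i j => s i (π j)) (fun i j => hs i (π j)) ?_ ?_ d e' hd he'
    · intro i; exact (Equiv.sum_comp π (s i)).trans (hrow i)
    · intro j; exact hcol (π j)
  have hlower : ∑ i, (d i - w i) ^ 2 ≤ ∑ i, ∑ j, (Xm - W) i j ^ 2 := by
    have h1 : ∑ i, (d i - e' i) ^ 2 ≤ ∑ i, ∑ j, (Xm - W) i j ^ 2 := by
      rw [hF2W, spf_expand, hsum_e'2, hcross]
      linarith
    have h2 : ∑ i, (d i - w i) ^ 2 ≤ ∑ i, (d i - e' i) ^ 2 :=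
      spf_sq_of_sqrt (hnn _) (hnn _) (hwnear e' he'Y)
    linarith
  -- conclude
  simp only [frobNorm]
  rw [hF2Z, hsq_eq]
  exact Real.sqrt_le_sqrt hlower
end
end
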